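/- arXiv:1906.10191 — 2 statements merged into one kernel-verified Lean document; each statement's English description precedes it below -/
import Mathlib

section
/- Along any solution of the three point vortex system in which the points remain distinct, the quantity S = l_{1,2}(t)²/ξ_3 + l_{2,3}(t)²/ξ_1 + l_{3,1}(t)²/ξ_2 is constant in time. -/
noncomputable def perp (x : EuclideanSpace ℝ (Fin 2)) : EuclideanSpace ℝ (Fin 2) :=
  WithLp.toLp 2 ![x 1, -x 0]

noncomputable def K (ε c : ℝ) (x : EuclideanSpace ℝ (Fin 2)) : EuclideanSpace ℝ (Fin 2) :=
  (c / ‖x‖ ^ (3 - ε)) • perp x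

/-!
Only two properties of the kernel matter: it is odd, and `K a ⟂ a`. Write
`S = ∑ᵢ ‖aᵢ‖² / ξᵢ₊₂` with `aᵢ = xᵢ - xᵢ₊₁` (indices mod 3). In the relative velocity
`ẋᵢ - ẋᵢ₊₁` the terms of the vortices `i` and `i + 1` are multiples of `K aᵢ`, orthogonal to
`aᵢ`; the remaining term is `-ξᵢ₊₂ (K aᵢ₊₁ + K aᵢ₊₂)`, so `ξᵢ₊₂` cancels and
`dS/dt = -2 ∑ᵢ ⟪aᵢ, K aᵢ₊₁ + K aᵢ₊₂⟫`. Regrouping this sum by kernel and using `∑ aᵢ = 0`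
turns it into `2 ∑ᵢ ⟪aᵢ, K aᵢ⟫ = 0`.
-/

open scoped RealInnerProductSpace

lemma perp_neg (x : EuclideanSpace ℝ (Fin 2)) : perp (-x) = -perp x := by
  ext i; fin_cases i <;> simp [perp]

lemma inner_perp_self (x : EuclideanSpace ℝ (Fin 2)) : ⟪perp x, x⟫ = 0 := by
  simp only [perp, PiLp.inner_apply, Fin.sum_univ_two, RCLike.inner_apply, conj_trivial,
    Fin.isValue, Matrix.cons_val_zero, Matrix.cons_val_one]
  ring

lemma K_neg (ε c : ℝ) (x : EuclideanSpace ℝ (Fin 2)) : K ε c (-x) = -K ε c x := by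
  simp [K, perp_neg]

lemma inner_self_K (ε c : ℝ) (x : EuclideanSpace ℝ (Fin 2)) : ⟪x, K ε c x⟫ = 0 := by
  rw [K, real_inner_smul_right, real_inner_comm, inner_perp_self, mul_zero]

theorem Fin.sum_univ_three_rotate {M : Type*} [AddCommMonoid M] (f : Fin 3 → M) (i : Fin 3) :
    ∑ l, f l = f i + f (i + 1) + f (i + 2) := by
  rw [← Equiv.sum_comp (Equiv.addLeft i) f, Fin.sum_univ_three]
  simp only [Equiv.coe_addLeft, add_zero]

lemma map_zero_of_odd {G V : Type*} [AddGroup G] [AddCommGroup V] [Module ℝ V] {f : G → V}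
    (hodd : ∀ x, f (-x) = -f x) : f 0 = 0 := by
  have h : (2 : ℝ) • f 0 = 0 := by rw [two_smul, ← sub_neg_eq_add, ← hodd, neg_zero, sub_self]
  exact (smul_eq_zero.mp h).resolve_left two_ne_zero

-- Addition in `Fin 3` wraps around, so this is `l₀₁²/ξ₂ + l₁₂²/ξ₀ + l₂₀²/ξ₁`.
noncomputable def vortexInvariant {E : Type*} [NormedAddCommGroup E] (ξ : Fin 3 → ℝ)
    (p : Fin 3 → E) : ℝ :=
  ∑ i, ‖p i - p (i + 1)‖ ^ 2 / ξ (i + 2)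

-- The self-interaction term `j = i` is included; it vanishes when `Φ 0 = 0`.
def vortexVelocity {ι V : Type*} [Fintype ι] [AddCommGroup V] [Module ℝ V] (Φ : V → V)
    (ξ : ι → ℝ) (p : ι → V) (i : ι) : V :=
  ∑ j, ξ j • Φ (p i - p j)

lemma sum_erase_smul_eq_vortexVelocity {ι V : Type*} [Fintype ι] [DecidableEq ι]
    [AddCommGroup V] [Module ℝ V] {Φ : V → V} (h0 : Φ 0 = 0) (ξ : ι → ℝ) (p : ι → V)
    (i : ι) :
    ∑ j ∈ Finset.univ.erase i, ξ j • Φ (p i - p j) = vortexVelocity Φ ξ p i :=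
  Finset.sum_erase _ (by rw [sub_self, h0, smul_zero])

section OrthogonalOddKernel

variable {E : Type*} [NormedAddCommGroup E] [InnerProductSpace ℝ E] {Φ : E → E}

lemma inner_sub_vortexVelocity (hodd : ∀ x, Φ (-x) = -Φ x) (horth : ∀ x, ⟪x, Φ x⟫ = 0)
    (ξ : Fin 3 → ℝ) (p : Fin 3 → E) (i : Fin 3) :
    ⟪p i - p (i + 1), vortexVelocity Φ ξ p i - vortexVelocity Φ ξ p (i + 1)⟫
      = -ξ (i + 2) * ⟪p i - p (i + 1), Φ (p (i + 1) - p (i + 2)) + Φ (p (i + 2) - p i)⟫ := by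
  simp only [vortexVelocity, Fin.sum_univ_three_rotate _ i, add_assoc, sub_self,
    map_zero_of_odd hodd, smul_zero, zero_add]
  rw [← neg_sub (p i), ← neg_sub (p (i + 2)) (p i), hodd, hodd]
  simp only [inner_sub_right, inner_add_right, inner_neg_right, inner_smul_right, horth]
  ring

lemma inner_add_inner_add_inner_eq_zero (horth : ∀ x, ⟪x, Φ x⟫ = 0) {a b c : E}
    (h : a + b + c = 0) : ⟪a, Φ b + Φ c⟫ + ⟪b, Φ c + Φ a⟫ + ⟪c, Φ a + Φ b⟫ = 0 := by
  have hsum : ⟪b + c, Φ a⟫ + ⟪c + a, Φ b⟫ + ⟪a + b, Φ c⟫ = 0 := by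
    rw [show b + c = -a by linear_combination (norm := module) h,
      show c + a = -b by linear_combination (norm := module) h,
      show a + b = -c by linear_combination (norm := module) h]
    simp only [inner_neg_left, horth, neg_zero, add_zero]
  rw [← hsum]
  simp only [inner_add_left, inner_add_right]
  ring

lemma sum_inner_cyclic_eq_zero (horth : ∀ x, ⟪x, Φ x⟫ = 0) (q : Fin 3 → E) :
    ∑ i, ⟪q i - q (i + 1), Φ (q (i + 1) - q (i + 2)) + Φ (q (i + 2) - q i)⟫ = 0 := by
  simp only [Fin.sum_univ_three, Fin.isValue, Fin.reduceAdd]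
  exact inner_add_inner_add_inner_eq_zero horth (by abel)

theorem hasDerivAt_vortexInvariant (hodd : ∀ x, Φ (-x) = -Φ x) (horth : ∀ x, ⟪x, Φ x⟫ = 0)
    {ξ : Fin 3 → ℝ} (hξ : ∀ i, ξ i ≠ 0) {p : Fin 3 → ℝ → E} {τ : ℝ}
    (hp : ∀ i, HasDerivAt (p i) (vortexVelocity Φ ξ (fun j ↦ p j τ) i) τ) :
    HasDerivAt (fun t ↦ vortexInvariant ξ (fun i ↦ p i t)) 0 τ := by
  have hterm (i : Fin 3) := (((hp i).sub (hp (i + 1))).norm_sq).div_const (ξ (i + 2))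
  refine (HasDerivAt.fun_sum fun i _ ↦ hterm i).congr_deriv ?_
  rw [← mul_zero (-2 : ℝ), ← sum_inner_cyclic_eq_zero horth (fun j ↦ p j τ), Finset.mul_sum]
  refine Finset.sum_congr rfl fun i _ ↦ ?_
  rw [Pi.sub_apply, inner_sub_vortexVelocity hodd horth ξ (fun j ↦ p j τ) i]
  field_simp [hξ (i + 2)]

end OrthogonalOddKernel

theorem stmt_2_general (ε c : ℝ)
    (ξ : Fin 3 → ℝ) (hξ : ∀ i, ξ i ≠ 0)
    (x : Fin 3 → ℝ → EuclideanSpace ℝ (Fin 2)) (I : Set ℝ) (hI : IsOpen I)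
    (hconn : IsPreconnected I)
    (hode : ∀ i : Fin 3, ∀ s ∈ I,
      HasDerivAt (x i) (∑ j ∈ Finset.univ.erase i, ξ j • K ε c (x i s - x j s)) s)
    (t s : ℝ) (ht : t ∈ I) (hs : s ∈ I) :
    ‖x 0 t - x 1 t‖ ^ 2 / ξ 2 + ‖x 1 t - x 2 t‖ ^ 2 / ξ 0 + ‖x 2 t - x 0 t‖ ^ 2 / ξ 1
      = ‖x 0 s - x 1 s‖ ^ 2 / ξ 2 + ‖x 1 s - x 2 s‖ ^ 2 / ξ 0
        + ‖x 2 s - x 0 s‖ ^ 2 / ξ 1 := by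
  have hderiv (τ : ℝ) (hτ : τ ∈ I) :
      HasDerivAt (fun t ↦ vortexInvariant ξ (fun i ↦ x i t)) 0 τ :=
    hasDerivAt_vortexInvariant (K_neg ε c) (inner_self_K ε c) hξ fun i ↦
      sum_erase_smul_eq_vortexVelocity (map_zero_of_odd (K_neg ε c)) ξ (fun j ↦ x j τ) i ▸
        hode i τ hτ
  have hconst := hI.is_const_of_deriv_eq_zero hconn
    (fun τ hτ ↦ (hderiv τ hτ).differentiableAt.differentiableWithinAt)
    (fun τ hτ ↦ (hderiv τ hτ).deriv) ht hs
  simpa only [vortexInvariant, Fin.sum_univ_three, Fin.isValue, Fin.reduceAdd] using hconst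

/-- the quantity `S = l₁₂²/ξ₃ + l₂₃²/ξ₁ + l₃₁²/ξ₂` is constant in time
along solutions of the three point vortex system. -/
theorem stmt_2 (ε c : ℝ) (hε : ε ∈ Set.Ioo (0:ℝ) 1) (hc : 0 < c)
    (ξ : Fin 3 → ℝ) (hξ : ∀ i, ξ i ≠ 0)
    (x : Fin 3 → ℝ → EuclideanSpace ℝ (Fin 2)) (I : Set ℝ) (hI : IsOpen I)
    (hconn : IsPreconnected I)
    (hdist : ∀ s ∈ I, ∀ i j : Fin 3, i ≠ j → x i s ≠ x j s)
    (hode : ∀ i : Fin 3, ∀ s ∈ I,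
      HasDerivAt (x i) (∑ j ∈ Finset.univ.erase i, ξ j • K ε c (x i s - x j s)) s)
    (t s : ℝ) (ht : t ∈ I) (hs : s ∈ I) :
    ‖x 0 t - x 1 t‖ ^ 2 / ξ 2 + ‖x 1 t - x 2 t‖ ^ 2 / ξ 0 + ‖x 2 t - x 0 t‖ ^ 2 / ξ 1
      = ‖x 0 s - x 1 s‖ ^ 2 / ξ 2 + ‖x 1 s - x 2 s‖ ^ 2 / ξ 0
        + ‖x 2 s - x 0 s‖ ^ 2 / ξ 1 :=
  stmt_2_general ε c ξ hξ x I hI hconn hode t s ht hs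
end

section
/- If along a solution of the three point vortex system the invariants S and S_ε both vanish, then each ratio l_{i,j}(t)²/l_{j,k}(t)² of squared mutual distances is constant in time; i.e., the triangle formed by the three vortices evolves self-similarly. -/
/-!
Write `L_ab = ‖x_a - x_b‖²`, `ρ_ab = ‖x_a - x_b‖^(ε-3)` and let `Δ` be the cross product of two
sides of the triangle, which does not depend on the side chosen. The equations of motion give
`L_ij' = 2 c ξ_k Δ (ρ_ik - ρ_jk)`. Since `‖·‖^(ε-1) = L ρ`, the hypotheses say that the vector
`(L_ij / ξ_k)` is orthogonal to both `(1,1,1)` and `(ρ_ij)`; eliminating one of its entries gives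
`ξ_k (ρ_ik - ρ_jk) L_jk = ξ_i (ρ_ij - ρ_ik) L_ij`, that is `L_ij' L_jk = L_ij L_jk'`. Hence every
ratio `L_ij / L_jk` has zero derivative on the interval `I`.
-/

open Finset RealInnerProductSpace

def cross (u v : EuclideanSpace ℝ (Fin 2)) : ℝ := u 0 * v 1 - u 1 * v 0

lemma inner_perp (u v : EuclideanSpace ℝ (Fin 2)) : ⟪u, perp v⟫ = cross u v := by
  simp only [perp, cross, PiLp.inner_apply, RCLike.inner_apply, Real.ringHom_apply,
    Fin.sum_univ_two, Matrix.cons_val_zero, Matrix.cons_val_one]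
  ring

lemma inner_K (ε c : ℝ) (u v : EuclideanSpace ℝ (Fin 2)) :
    ⟪u, K ε c v⟫ = c * ‖v‖ ^ (ε - 3) * cross u v := by
  rw [K, real_inner_smul_right, inner_perp, show ε - 3 = -(3 - ε) by ring,
    Real.rpow_neg (norm_nonneg v), div_eq_mul_inv]

lemma cross_sub_cycle (a b c : EuclideanSpace ℝ (Fin 2)) :
    cross (b - c) (c - a) = cross (a - b) (b - c) := by
  simp only [cross, PiLp.sub_apply]
  ring

theorem Fin.univ_erase_eq_pair_of_three {i j k : Fin 3} (hij : i ≠ j) (hik : i ≠ k)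
    (hjk : j ≠ k) : univ.erase i = {j, k} := by
  revert i j k; decide

theorem Fin.cyclic_sum_three {M : Type*} [AddCommMonoid M] (f : Fin 3 → Fin 3 → Fin 3 → M)
    (hf : ∀ a b c, f a b c = f b a c) {i j k : Fin 3} (hij : i ≠ j) (hik : i ≠ k) (hjk : j ≠ k) :
    f i j k + f j k i + f k i j = f 0 1 2 + f 1 2 0 + f 2 0 1 := by
  fin_cases i <;> fin_cases j <;> fin_cases k <;> simp_all [hf 1 0, hf 2 0, hf 2 1] <;> abel

theorem Convex.eq_of_hasDerivAt_eq_zero {G : Type*} [NormedAddCommGroup G] [NormedSpace ℝ G]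
    {s : Set ℝ} {f : ℝ → G} (hs : Convex ℝ s) (hf : ∀ x ∈ s, HasDerivAt f 0 x)
    {x y : ℝ} (hx : x ∈ s) (hy : y ∈ s) : f x = f y := by
  have := hs.norm_image_sub_le_of_norm_hasDerivWithin_le
    (fun z hz => (hf z hz).hasDerivWithinAt) (fun _ _ => norm_zero.le) hx hy
  rw [zero_mul, norm_le_zero_iff, sub_eq_zero] at this
  exact this.symm

lemma mul_sub_eq_of_sum_div_eq_zero {α : Type*} [Field α] {ξi ξj ξk A B C ρA ρB ρC : α}
    (hi : ξi ≠ 0) (hk : ξk ≠ 0) (h : C / ξk + A / ξi + B / ξj = 0)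
    (hρ : C * ρC / ξk + A * ρA / ξi + B * ρB / ξj = 0) :
    ξk * (ρB - ρA) * A = ξi * (ρC - ρB) * C := by
  have hB : C * (ρB - ρC) / ξk + A * (ρB - ρA) / ξi = 0 := by
    linear_combination ρB * h - hρ
  field_simp at hB
  linear_combination hB

section PointVortices

variable {ε c : ℝ} {ξ : Fin 3 → ℝ} {x : Fin 3 → ℝ → EuclideanSpace ℝ (Fin 2)} {t : ℝ}

lemma hasDerivAt_norm_sub_sq
    (hode : ∀ i, HasDerivAt (x i) (∑ j ∈ univ.erase i, ξ j • K ε c (x i t - x j t)) t)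
    {i j k : Fin 3} (hij : i ≠ j) (hik : i ≠ k) (hjk : j ≠ k) :
    HasDerivAt (fun s => ‖x i s - x j s‖ ^ 2)
      (2 * c * ξ k * cross (x i t - x j t) (x j t - x k t) *
        (‖x i t - x k t‖ ^ (ε - 3) - ‖x j t - x k t‖ ^ (ε - 3))) t := by
  have hi := hode i
  have hj := hode j
  rw [Fin.univ_erase_eq_pair_of_three hij hik hjk, sum_pair hjk] at hi
  rw [Fin.univ_erase_eq_pair_of_three hij.symm hjk hik, sum_pair hik] at hj
  refine (hi.sub hj).norm_sq.congr_deriv ?_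
  simp only [inner_sub_right, inner_add_right, real_inner_smul_right, inner_K, cross,
    Pi.sub_apply, PiLp.sub_apply]
  ring

lemma norm_sub_sq_mul_eq_of_invariants_eq_zero {E : Type*} [NormedAddCommGroup E]
    {ε : ℝ} {ξ : Fin 3 → ℝ} (hξ : ∀ i, ξ i ≠ 0) {p : Fin 3 → E}
    (hdist : ∀ i j, i ≠ j → p i ≠ p j)
    (hS : ‖p 0 - p 1‖ ^ 2 / ξ 2 + ‖p 1 - p 2‖ ^ 2 / ξ 0 + ‖p 2 - p 0‖ ^ 2 / ξ 1 = 0)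
    (hSε : ‖p 0 - p 1‖ ^ (ε - 1) / ξ 2 + ‖p 1 - p 2‖ ^ (ε - 1) / ξ 0
      + ‖p 2 - p 0‖ ^ (ε - 1) / ξ 1 = 0)
    {i j k : Fin 3} (hij : i ≠ j) (hik : i ≠ k) (hjk : j ≠ k) :
    ξ k * (‖p i - p k‖ ^ (ε - 3) - ‖p j - p k‖ ^ (ε - 3)) * ‖p j - p k‖ ^ 2
      = ξ i * (‖p i - p j‖ ^ (ε - 3) - ‖p i - p k‖ ^ (ε - 3)) * ‖p i - p j‖ ^ 2 := by
  have hS' := Fin.cyclic_sum_three (fun a b c => ‖p a - p b‖ ^ 2 / ξ c)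
    (fun a b c => by rw [norm_sub_rev]) hij hik hjk
  have hSε' := Fin.cyclic_sum_three (fun a b c => ‖p a - p b‖ ^ (ε - 1) / ξ c)
    (fun a b c => by rw [norm_sub_rev]) hij hik hjk
  rw [hS] at hS'
  rw [hSε] at hSε'
  have hsplit : ∀ a b, a ≠ b →
      ‖p a - p b‖ ^ (ε - 1) = ‖p a - p b‖ ^ 2 * ‖p a - p b‖ ^ (ε - 3) := by
    intro a b hab
    rw [mul_comm, ← Real.rpow_add_natCast (norm_ne_zero_iff.2 (sub_ne_zero.2 (hdist a b hab)))]
    ring_nf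
  rw [hsplit i j hij, hsplit j k hjk, hsplit k i hik.symm, norm_sub_rev (p k) (p i)] at hSε'
  rw [norm_sub_rev (p k) (p i)] at hS'
  exact mul_sub_eq_of_sum_div_eq_zero (hξ i) (hξ k) hS' hSε'

lemma hasDerivAt_div_norm_sub_sq_eq_zero (hξ : ∀ i, ξ i ≠ 0)
    (hode : ∀ i, HasDerivAt (x i) (∑ j ∈ univ.erase i, ξ j • K ε c (x i t - x j t)) t)
    (hdist : ∀ i j, i ≠ j → x i t ≠ x j t)
    (hS : ‖x 0 t - x 1 t‖ ^ 2 / ξ 2 + ‖x 1 t - x 2 t‖ ^ 2 / ξ 0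
      + ‖x 2 t - x 0 t‖ ^ 2 / ξ 1 = 0)
    (hSε : ‖x 0 t - x 1 t‖ ^ (ε - 1) / ξ 2 + ‖x 1 t - x 2 t‖ ^ (ε - 1) / ξ 0
      + ‖x 2 t - x 0 t‖ ^ (ε - 1) / ξ 1 = 0)
    {i j k : Fin 3} (hij : i ≠ j) (hik : i ≠ k) (hjk : j ≠ k) :
    HasDerivAt (fun s => ‖x i s - x j s‖ ^ 2 / ‖x j s - x k s‖ ^ 2) 0 t := by
  have key := norm_sub_sq_mul_eq_of_invariants_eq_zero (p := fun m => x m t) hξ hdist hS hSε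
    hij hik hjk
  refine ((hasDerivAt_norm_sub_sq hode hij hik hjk).div
    (hasDerivAt_norm_sub_sq hode hjk hij.symm hik.symm)
    (pow_ne_zero 2 (norm_ne_zero_iff.2 (sub_ne_zero.2 (hdist j k hjk))))).congr_deriv ?_
  rw [div_eq_zero_iff, norm_sub_rev (x j t) (x i t), norm_sub_rev (x k t) (x i t),
    cross_sub_cycle (x i t) (x j t) (x k t)]
  left
  linear_combination (2 * c * cross (x i t - x j t) (x j t - x k t)) * key

end PointVortices

theorem stmt_5_general (ε c : ℝ)
    (ξ : Fin 3 → ℝ) (hξ : ∀ i, ξ i ≠ 0)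
    (x : Fin 3 → ℝ → EuclideanSpace ℝ (Fin 2)) (I : Set ℝ)
    (hconn : IsPreconnected I)
    (hdist : ∀ s ∈ I, ∀ i j : Fin 3, i ≠ j → x i s ≠ x j s)
    (hode : ∀ i : Fin 3, ∀ s ∈ I,
      HasDerivAt (x i) (∑ j ∈ Finset.univ.erase i, ξ j • K ε c (x i s - x j s)) s)
    (hS : ∀ t ∈ I,
      ‖x 0 t - x 1 t‖ ^ 2 / ξ 2 + ‖x 1 t - x 2 t‖ ^ 2 / ξ 0
        + ‖x 2 t - x 0 t‖ ^ 2 / ξ 1 = 0)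
    (hSε : ∀ t ∈ I,
      ‖x 0 t - x 1 t‖ ^ (ε - 1) / ξ 2 + ‖x 1 t - x 2 t‖ ^ (ε - 1) / ξ 0
        + ‖x 2 t - x 0 t‖ ^ (ε - 1) / ξ 1 = 0) :
    ∀ i j k : Fin 3, i ≠ j → i ≠ k → j ≠ k → ∀ t ∈ I, ∀ s ∈ I,
      ‖x i t - x j t‖ ^ 2 / ‖x j t - x k t‖ ^ 2
        = ‖x i s - x j s‖ ^ 2 / ‖x j s - x k s‖ ^ 2 := by
  intro i j k hij hik hjk t ht s hs
  exact hconn.convex.eq_of_hasDerivAt_eq_zero (fun u hu =>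
    hasDerivAt_div_norm_sub_sq_eq_zero hξ (fun m => hode m u hu) (hdist u hu) (hS u hu)
      (hSε u hu) hij hik hjk) ht hs

/-- if the invariants `S` and `S_ε` both vanish, then every ratio of
squared mutual distances is constant in time (self-similar evolution). -/
theorem stmt_5 (ε c : ℝ) (hε : ε ∈ Set.Ioo (0:ℝ) 1) (hc : 0 < c)
    (ξ : Fin 3 → ℝ) (hξ : ∀ i, ξ i ≠ 0)
    (x : Fin 3 → ℝ → EuclideanSpace ℝ (Fin 2)) (I : Set ℝ) (hI : IsOpen I)
    (hconn : IsPreconnected I)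
    (hdist : ∀ s ∈ I, ∀ i j : Fin 3, i ≠ j → x i s ≠ x j s)
    (hode : ∀ i : Fin 3, ∀ s ∈ I,
      HasDerivAt (x i) (∑ j ∈ Finset.univ.erase i, ξ j • K ε c (x i s - x j s)) s)
    (hS : ∀ t ∈ I,
      ‖x 0 t - x 1 t‖ ^ 2 / ξ 2 + ‖x 1 t - x 2 t‖ ^ 2 / ξ 0
        + ‖x 2 t - x 0 t‖ ^ 2 / ξ 1 = 0)
    (hSε : ∀ t ∈ I,
      ‖x 0 t - x 1 t‖ ^ (ε - 1) / ξ 2 + ‖x 1 t - x 2 t‖ ^ (ε - 1) / ξ 0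
        + ‖x 2 t - x 0 t‖ ^ (ε - 1) / ξ 1 = 0) :
    ∀ i j k : Fin 3, i ≠ j → i ≠ k → j ≠ k → ∀ t ∈ I, ∀ s ∈ I,
      ‖x i t - x j t‖ ^ 2 / ‖x j t - x k t‖ ^ 2
        = ‖x i s - x j s‖ ^ 2 / ‖x j s - x k s‖ ^ 2 :=
  stmt_5_general ε c ξ hξ x I hconn hdist hode hS hSε
end
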